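/- arXiv:1410.6136 — 5 statements merged into one kernel-verified Lean document; each statement's English description precedes it below -/
import Mathlib

section
/- Let p ≥ 5 be prime and let a, b ∈ ℤ/pℤ be such that the vector (a, b, −1) has no zero entries, no two entries summing to zero, and the sum a + b − 1 is nonzero. Then there exists an invertible k ∈ ℤ/pℤ such that ⟨ak⟩ + ⟨bk⟩ + ⟨−k⟩ < p, where ⟨x⟩ denotes the unique representative of x in {0, 1, ..., p−1}. -/
open Finset

set_option linter.unusedSectionVars false

namespace ResidueSumAux

noncomputable def e (p : ℕ) (ζ : ℂ) (x : ZMod p) : ℂ := ζ ^ x.val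

variable {p : ℕ} [NeZero p] {ζ : ℂ}

lemma pow_val_mod (hζ : IsPrimitiveRoot ζ p) (n : ℕ) : ζ ^ (n % p) = ζ ^ n := by
  conv_rhs => rw [← Nat.div_add_mod n p]
  rw [pow_add, pow_mul, hζ.pow_eq_one, one_pow, one_mul]

lemma e_add (hζ : IsPrimitiveRoot ζ p) (x y : ZMod p) :
    e p ζ (x + y) = e p ζ x * e p ζ y := by
  unfold e
  rw [ZMod.val_add, pow_val_mod hζ, pow_add]

lemma e_zero (ζ : ℂ) : e p ζ 0 = 1 := by
  unfold e; rw [ZMod.val_zero, pow_zero]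

lemma sum_range_eq (ζ : ℂ) :
    ∑ x : ZMod p, e p ζ x = ∑ i ∈ Finset.range p, ζ ^ i := by
  refine Finset.sum_bij' (fun (x : ZMod p) _ => x.val) (fun i _ => (i : ZMod p)) ?_ ?_ ?_ ?_ ?_
  · intro x _; exact Finset.mem_range.mpr (ZMod.val_lt x)
  · intro i _; exact Finset.mem_univ _
  · intro x _; rw [ZMod.natCast_val, ZMod.cast_id]
  · intro i hi; rw [ZMod.val_cast_of_lt (Finset.mem_range.mp hi)]
  · intro x _; rfl

lemma sum_e (hζ : IsPrimitiveRoot ζ p) (hp1 : 1 < p) : ∑ x : ZMod p, e p ζ x = 0 := by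
  rw [sum_range_eq, hζ.geom_sum_eq_zero hp1]


lemma sum_e_mul (hζ : IsPrimitiveRoot ζ p) (hp1 : 1 < p) {u : ZMod p} (hu : u ≠ 0)
    [Fact p.Prime] :
    ∑ x : ZMod p, e p ζ (x * u) = 0 := by
  rw [← sum_e hζ hp1]
  exact Fintype.sum_bijective (Equiv.mulRight₀ u hu) (Equiv.bijective _)
    (fun x => e p ζ (x * u)) (e p ζ) (fun x => rfl)

lemma orth [Fact p.Prime] (hζ : IsPrimitiveRoot ζ p) (hp1 : 1 < p) (u : ZMod p) :
    ∑ x : ZMod p, e p ζ (x * u) = ((if u = 0 then p else 0 : ℕ) : ℂ) := by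
  by_cases h : u = 0
  · subst h
    rw [if_pos rfl]
    simp only [mul_zero, e_zero, Finset.sum_const, Finset.card_univ, ZMod.card, nsmul_eq_mul,
      mul_one]
  · rw [if_neg h, Nat.cast_zero, sum_e_mul hζ hp1 h]

noncomputable def G (p : ℕ) [NeZero p] (ζ : ℂ) (u : ZMod p) : ℂ :=
  ∑ s : ZMod p, (s.val : ℂ) * e p ζ (s * u)

lemma val_sub_one (s : ZMod p) (hs : s ≠ 0) : (s - 1).val = s.val - 1 := by
  have h1 : 1 ≤ s.val := Nat.one_le_iff_ne_zero.mpr (fun h => hs ((ZMod.val_eq_zero s).mp h))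
  have h2 : s.val - 1 < p := lt_of_le_of_lt (Nat.sub_le _ _) (ZMod.val_lt s)
  have h3 : (s - 1 : ZMod p) = ((s.val - 1 : ℕ) : ZMod p) := by
    rw [Nat.cast_sub h1, ZMod.natCast_val, ZMod.cast_id, Nat.cast_one]
  rw [h3, ZMod.val_cast_of_lt h2]

lemma key [Fact p.Prime] (hζ : IsPrimitiveRoot ζ p) (hp1 : 1 < p) (u : ZMod p) (hu : u ≠ 0) :
    (e p ζ u - 1) * G p ζ u = p := by
  have h1 : e p ζ u * G p ζ u = ∑ s : ZMod p, ((s - 1).val : ℂ) * e p ζ (s * u) := by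
    rw [G, Finset.mul_sum]
    have step1 : ∀ s : ZMod p,
        e p ζ u * ((s.val : ℂ) * e p ζ (s * u)) = (s.val : ℂ) * e p ζ ((s + 1) * u) := by
      intro s
      rw [show (s + 1) * u = s * u + u by ring, e_add hζ]
      ring
    rw [Finset.sum_congr rfl (fun s _ => step1 s)]
    exact Fintype.sum_bijective (Equiv.addRight (1 : ZMod p)) (Equiv.bijective _)
      (fun s => (s.val : ℂ) * e p ζ ((s + 1) * u))
      (fun s => ((s - 1).val : ℂ) * e p ζ (s * u))
      (fun s => by simp [Equiv.coe_addRight, add_sub_cancel_right])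
  have h2 : (e p ζ u - 1) * G p ζ u
      = ∑ s : ZMod p, (((s - 1).val : ℂ) - (s.val : ℂ)) * e p ζ (s * u) := by
    rw [sub_mul, one_mul, h1, G, ← Finset.sum_sub_distrib]
    exact Finset.sum_congr rfl (fun s _ => by ring)
  have h3 : ∀ s : ZMod p, (((s - 1).val : ℂ) - (s.val : ℂ))
      = ((if s = 0 then p else 0 : ℕ) : ℂ) - 1 := by
    intro s
    by_cases hs : s = 0
    · subst hs
      haveI : Fact (1 < p) := ⟨hp1⟩
      rw [if_pos rfl, ZMod.val_zero, Nat.cast_zero, sub_zero,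
          show (0 : ZMod p) - 1 = -1 by ring, ZMod.neg_val, if_neg (one_ne_zero), ZMod.val_one]
      push_cast [Nat.cast_sub hp1.le]
      ring
    · rw [if_neg hs, val_sub_one s hs, Nat.cast_zero, zero_sub]
      have h1' : 1 ≤ s.val := Nat.one_le_iff_ne_zero.mpr (fun h => hs ((ZMod.val_eq_zero s).mp h))
      push_cast [Nat.cast_sub h1']
      ring
  rw [h2, Finset.sum_congr rfl (fun s _ => by rw [h3 s])]
  have h4 : ∑ s : ZMod p, (((if s = 0 then p else 0 : ℕ) : ℂ) - 1) * e p ζ (s * u)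
      = (∑ s : ZMod p, ((if s = 0 then p else 0 : ℕ) : ℂ) * e p ζ (s * u))
        - ∑ s : ZMod p, e p ζ (s * u) := by
    rw [← Finset.sum_sub_distrib]
    exact Finset.sum_congr rfl (fun s _ => by ring)
  rw [h4, sum_e_mul hζ hp1 hu, sub_zero]
  rw [Finset.sum_eq_single 0]
  · rw [if_pos rfl, zero_mul, e_zero, mul_one]
  · intro b _ hb; rw [if_neg hb, Nat.cast_zero, zero_mul]
  · intro h; exact absurd (Finset.mem_univ 0) h

lemma G_shift [Fact p.Prime] (hζ : IsPrimitiveRoot ζ p) (w m : ZMod p) (hw : w ≠ 0) :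
    ∑ t : ZMod p, ((w * t).val : ℂ) * e p ζ (m * t) = G p ζ (m * w⁻¹) := by
  rw [G]
  refine Fintype.sum_bijective (Equiv.mulLeft₀ w hw) (Equiv.bijective _)
    (fun t => ((w * t).val : ℂ) * e p ζ (m * t))
    (fun s => (s.val : ℂ) * e p ζ (s * (m * w⁻¹))) (fun t => ?_)
  simp only [Equiv.mulLeft₀_apply]
  congr 2
  field_simp


lemma no_pairing [Fact p.Prime] (hζ : IsPrimitiveRoot ζ p) (hp1 : 1 < p)
    (hp2 : (2 : ZMod p) ≠ 0)
    (v1 v2 v3 v4 : ZMod p) (h1 : v1 ≠ 0) (h2 : v2 ≠ 0) (h3 : v3 ≠ 0) (h4 : v4 ≠ 0)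
    (hrel : ∀ m : ZMod p, m ≠ 0 →
      G p ζ (m * v1) + G p ζ (m * v2) + G p ζ (m * v3) + G p ζ (m * v4) = -2 * p) :
    v2 = -v1 ∨ v3 = -v1 ∨ v4 = -v1 := by
  have hpz : (p : ℂ) ≠ 0 := Nat.cast_ne_zero.mpr (NeZero.ne p)
  set σ : ZMod p := v1 + v2 + v3 + v4 with hσ
  have hQ : ∀ m : ZMod p,
      2 * e p ζ (m * σ)
      - (e p ζ (m * (σ - v1)) + e p ζ (m * (σ - v2)) + e p ζ (m * (σ - v3))
        + e p ζ (m * (σ - v4)))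
      + (e p ζ (m * v1) + e p ζ (m * v2) + e p ζ (m * v3) + e p ζ (m * v4))
      - 2 * e p ζ (m * 0) = 0 := by
    intro m
    by_cases hm : m = 0
    · subst hm; simp only [zero_mul, e_zero]; ring
    · have k1 := key hζ hp1 _ (mul_ne_zero hm h1)
      have k2 := key hζ hp1 _ (mul_ne_zero hm h2)
      have k3 := key hζ hp1 _ (mul_ne_zero hm h3)
      have k4 := key hζ hp1 _ (mul_ne_zero hm h4)
      have hs := hrel m hm
      rw [mul_zero, e_zero,
          show σ - v1 = v2 + v3 + v4 by rw [hσ]; ring,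
          show σ - v2 = v1 + v3 + v4 by rw [hσ]; ring,
          show σ - v3 = v1 + v2 + v4 by rw [hσ]; ring,
          show σ - v4 = v1 + v2 + v3 by rw [hσ]; ring, hσ]
      simp only [mul_add, e_add hζ]
      refine (mul_eq_zero.mp ?_).resolve_right hpz
      linear_combination hs * ((e p ζ (m*v1) - 1) * (e p ζ (m*v2) - 1) * (e p ζ (m*v3) - 1) * (e p ζ (m*v4) - 1))
        - k1 * ((e p ζ (m*v2) - 1) * (e p ζ (m*v3) - 1) * (e p ζ (m*v4) - 1))
        - k2 * ((e p ζ (m*v1) - 1) * (e p ζ (m*v3) - 1) * (e p ζ (m*v4) - 1))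
        - k3 * ((e p ζ (m*v1) - 1) * (e p ζ (m*v2) - 1) * (e p ζ (m*v4) - 1))
        - k4 * ((e p ζ (m*v1) - 1) * (e p ζ (m*v2) - 1) * (e p ζ (m*v3) - 1))
  have hQr : ∀ r : ZMod p,
      2 * ((if σ - r = 0 then p else 0 : ℕ) : ℂ)
      - (((if σ - v1 - r = 0 then p else 0 : ℕ) : ℂ)
        + ((if σ - v2 - r = 0 then p else 0 : ℕ) : ℂ)
        + ((if σ - v3 - r = 0 then p else 0 : ℕ) : ℂ)
        + ((if σ - v4 - r = 0 then p else 0 : ℕ) : ℂ))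
      + (((if v1 - r = 0 then p else 0 : ℕ) : ℂ)
        + ((if v2 - r = 0 then p else 0 : ℕ) : ℂ)
        + ((if v3 - r = 0 then p else 0 : ℕ) : ℂ)
        + ((if v4 - r = 0 then p else 0 : ℕ) : ℂ))
      - 2 * ((if 0 - r = 0 then p else 0 : ℕ) : ℂ) = 0 := by
    intro r
    have hstep : ∀ m : ZMod p,
        2 * e p ζ (m * (σ - r))
        - (e p ζ (m * (σ - v1 - r)) + e p ζ (m * (σ - v2 - r)) + e p ζ (m * (σ - v3 - r))
          + e p ζ (m * (σ - v4 - r)))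
        + (e p ζ (m * (v1 - r)) + e p ζ (m * (v2 - r)) + e p ζ (m * (v3 - r))
          + e p ζ (m * (v4 - r)))
        - 2 * e p ζ (m * (0 - r)) = 0 := by
      intro m
      have hmul : ∀ x : ZMod p, e p ζ (m * (x - r)) = e p ζ (m * x) * e p ζ (m * (-r)) := by
        intro x; rw [show m * (x - r) = m * x + m * (-r) by ring, e_add hζ]
      rw [hmul σ, hmul (σ - v1), hmul (σ - v2), hmul (σ - v3), hmul (σ - v4),
          hmul v1, hmul v2, hmul v3, hmul v4, hmul 0]
      linear_combination (e p ζ (m * (-r))) * hQ m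
    have hsum0 : ∑ m : ZMod p,
        (2 * e p ζ (m * (σ - r))
        - (e p ζ (m * (σ - v1 - r)) + e p ζ (m * (σ - v2 - r)) + e p ζ (m * (σ - v3 - r))
          + e p ζ (m * (σ - v4 - r)))
        + (e p ζ (m * (v1 - r)) + e p ζ (m * (v2 - r)) + e p ζ (m * (v3 - r))
          + e p ζ (m * (v4 - r)))
        - 2 * e p ζ (m * (0 - r))) = 0 := by
      rw [Finset.sum_congr rfl (fun m _ => hstep m), Finset.sum_const_zero]
    simp only [Finset.sum_sub_distrib, Finset.sum_add_distrib, ← Finset.mul_sum] at hsum0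
    rw [orth hζ hp1 (σ - r), orth hζ hp1 (σ - v1 - r), orth hζ hp1 (σ - v2 - r),
        orth hζ hp1 (σ - v3 - r), orth hζ hp1 (σ - v4 - r), orth hζ hp1 (v1 - r),
        orth hζ hp1 (v2 - r), orth hζ hp1 (v3 - r), orth hζ hp1 (v4 - r),
        orth hζ hp1 (0 - r)] at hsum0
    linear_combination hsum0
  have hσ0 : σ = 0 := by
    by_contra hσne
    have h := hQr 0
    simp only [sub_zero] at h
    rw [if_neg hσne, if_neg h1, if_neg h2, if_neg h3, if_neg h4] at h
    push_cast [if_true] at h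
    have hX : (((if σ - v1 = 0 then p else 0) + (if σ - v2 = 0 then p else 0)
        + (if σ - v3 = 0 then p else 0) + (if σ - v4 = 0 then p else 0) + 2 * p : ℕ) : ℂ)
        = 0 := by
      push_cast
      linear_combination -h
    have hN := Nat.cast_eq_zero.mp hX
    omega
  by_contra hno
  push_neg at hno
  obtain ⟨hn2, hn3, hn4⟩ := hno
  have h := hQr v1
  rw [hσ0] at h
  have c1 : (0 : ZMod p) - v1 ≠ 0 := fun hx => h1 (by linear_combination -hx)
  have c2 : (0 : ZMod p) - v1 - v1 ≠ 0 := by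
    intro hx
    have h2v : v1 * 2 = 0 := by linear_combination -hx
    rcases mul_eq_zero.mp h2v with hv | hv
    · exact h1 hv
    · exact hp2 hv
  have c3 : (0 : ZMod p) - v2 - v1 ≠ 0 := fun hx => hn2 (by linear_combination -hx)
  have c4 : (0 : ZMod p) - v3 - v1 ≠ 0 := fun hx => hn3 (by linear_combination -hx)
  have c5 : (0 : ZMod p) - v4 - v1 ≠ 0 := fun hx => hn4 (by linear_combination -hx)
  rw [if_neg c1, if_neg c2, if_neg c3, if_neg c4, if_neg c5, if_pos (sub_self v1)] at h
  push_cast at h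
  have hX : ((p + (if v2 - v1 = 0 then p else 0) + (if v3 - v1 = 0 then p else 0)
      + (if v4 - v1 = 0 then p else 0) : ℕ) : ℂ) = 0 := by
    push_cast
    linear_combination h
  have hN := Nat.cast_eq_zero.mp hX
  omega

end ResidueSumAux

open ResidueSumAux in
/-- Let `p ≥ 5` be prime and `a b : ZMod p` with
`a ≠ 0`, `b ≠ 0`, `a + b ≠ 0`, `a ≠ 1`, `b ≠ 1`, `a + b ≠ 1`
(i.e. the vector `(a, b, -1)` has no zero entries, no two entries summing to zero,
and nonzero total sum).  Then there is an invertible `k` with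
`⟨ak⟩ + ⟨bk⟩ + ⟨-k⟩ < p`, where `⟨x⟩` is the least nonnegative residue. -/
theorem exists_unit_residue_sum_lt
    (p : ℕ) (hp : p.Prime) (hp5 : 5 ≤ p) (a b : ZMod p)
    (ha : a ≠ 0) (hb : b ≠ 0) (hab : a + b ≠ 0)
    (ha1 : a ≠ 1) (hb1 : b ≠ 1) (hab1 : a + b ≠ 1) :
    ∃ k : ZMod p, k ≠ 0 ∧ (a * k).val + (b * k).val + (-k).val < p := by
  haveI instF : Fact p.Prime := ⟨hp⟩
  haveI : NeZero p := ⟨hp.ne_zero⟩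
  have hp1 : 1 < p := hp.one_lt
  set d : ZMod p := 1 - a - b with hd_def
  have hd : d ≠ 0 := by
    intro h
    rw [hd_def] at h
    exact hab1 (by linear_combination -h)
  have hn1 : (-1 : ZMod p) ≠ 0 := by
    intro h
    exact one_ne_zero (α := ZMod p) (by linear_combination -h)
  by_contra hcon
  push_neg at hcon
  have hvalpos : ∀ x : ZMod p, x ≠ 0 → 1 ≤ x.val := fun x hx =>
    Nat.one_le_iff_ne_zero.mpr (fun h => hx ((ZMod.val_eq_zero x).mp h))
  have hnegpair : ∀ x : ZMod p, x ≠ 0 → x.val + (-x).val = p := by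
    intro x hx
    rw [ZMod.neg_val, if_neg hx]
    have := ZMod.val_lt x
    omega
  have hlow : ∀ t : ZMod p, t ≠ 0 →
      (a * t).val + (b * t).val + (-t).val + (d * t).val ≠ p := by
    intro t ht hEq
    have h1 := hcon t ht
    have h2 := hvalpos (d * t) (mul_ne_zero hd ht)
    omega
  have hV2 : ∀ t : ZMod p, t ≠ 0 →
      (a * t).val + (b * t).val + (-t).val + (d * t).val = 2 * p := by
    intro t ht
    have hat := mul_ne_zero ha ht
    have hbt := mul_ne_zero hb ht
    have hnt : (-t : ZMod p) ≠ 0 := neg_ne_zero.mpr ht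
    have hdt := mul_ne_zero hd ht
    have hdvd : p ∣ (a * t).val + (b * t).val + (-t).val + (d * t).val := by
      have hcast : (((a * t).val + (b * t).val + (-t).val + (d * t).val : ℕ) : ZMod p) = 0 := by
        push_cast [ZMod.natCast_val, ZMod.cast_id]
        rw [hd_def]
        ring
      exact (ZMod.natCast_eq_zero_iff _ p).mp hcast
    have hu1 := ZMod.val_lt (a * t)
    have hu2 := ZMod.val_lt (b * t)
    have hu3 := ZMod.val_lt (-t : ZMod p)
    have hu4 := ZMod.val_lt (d * t)
    have hl1 := hvalpos _ hat
    have hl2 := hvalpos _ hbt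
    have hl3 := hvalpos _ hnt
    have hl4 := hvalpos _ hdt
    obtain ⟨c, hc⟩ := hdvd
    have hS4 : (a * t).val + (b * t).val + (-t).val + (d * t).val < 4 * p := by omega
    have hcle : c ≤ 3 := by
      by_contra hcgt
      push_neg at hcgt
      have h4 : p * 4 ≤ p * c := Nat.mul_le_mul (Nat.le_refl p) hcgt
      rw [hc] at hS4
      exact absurd hS4 (not_lt.mpr (le_trans (le_of_eq (Nat.mul_comm 4 p)) h4))
    have hcge : 1 ≤ c := by
      rcases Nat.eq_zero_or_pos c with h0 | h
      · subst h0
        rw [Nat.mul_zero] at hc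
        omega
      · exact h
    interval_cases c
    · exact absurd (by omega) (hlow t ht)
    · omega
    · exfalso
      apply hlow (-t) hnt
      have e1 : a * -t = -(a * t) := by ring
      have e2 : b * -t = -(b * t) := by ring
      have e4 : d * -t = -(d * t) := by ring
      rw [e1, e2, neg_neg, e4]
      have p1 := hnegpair (a * t) hat
      have p2 := hnegpair (b * t) hbt
      have p3 := hnegpair (-t) hnt
      rw [neg_neg] at p3
      have p4 := hnegpair (d * t) hdt
      omega
  obtain ⟨ζ, hζ⟩ : ∃ ζ : ℂ, IsPrimitiveRoot ζ p :=
    ⟨_, Complex.isPrimitiveRoot_exp p hp.ne_zero⟩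
  have hp2 : (2 : ZMod p) ≠ 0 := by
    intro h
    have h2 : ((2 : ℕ) : ZMod p) = 0 := by exact_mod_cast h
    have := Nat.le_of_dvd (by norm_num) ((ZMod.natCast_eq_zero_iff 2 p).mp h2)
    omega
  have hrel : ∀ m : ZMod p, m ≠ 0 →
      G p ζ (m * a⁻¹) + G p ζ (m * b⁻¹) + G p ζ (m * (-1 : ZMod p)⁻¹) + G p ζ (m * d⁻¹)
        = -2 * p := by
    intro m hm
    rw [← G_shift hζ a m ha, ← G_shift hζ b m hb, ← G_shift hζ (-1 : ZMod p) m hn1,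
        ← G_shift hζ d m hd]
    have hcomb : ∀ t : ZMod p,
        ((a * t).val : ℂ) * e p ζ (m * t) + ((b * t).val : ℂ) * e p ζ (m * t)
        + (((-1 : ZMod p) * t).val : ℂ) * e p ζ (m * t) + ((d * t).val : ℂ) * e p ζ (m * t)
        = (((a * t).val + (b * t).val + (-t).val + (d * t).val : ℕ) : ℂ) * e p ζ (m * t) := by
      intro t
      rw [neg_one_mul]
      push_cast
      ring
    have hsplit : ∀ t : ZMod p,
        (((a * t).val + (b * t).val + (-t).val + (d * t).val : ℕ) : ℂ) * e p ζ (m * t)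
        = (2 * p : ℂ) * e p ζ (m * t) + (if t = 0 then (-2 * p : ℂ) else 0) := by
      intro t
      by_cases ht : t = 0
      · subst ht
        rw [if_pos rfl]
        simp only [mul_zero, neg_zero, ZMod.val_zero, e_zero]
        norm_num
      · rw [if_neg ht, hV2 t ht]
        push_cast
        ring
    calc ∑ t : ZMod p, ((a * t).val : ℂ) * e p ζ (m * t)
          + ∑ t : ZMod p, ((b * t).val : ℂ) * e p ζ (m * t)
          + ∑ t : ZMod p, (((-1 : ZMod p) * t).val : ℂ) * e p ζ (m * t)
          + ∑ t : ZMod p, ((d * t).val : ℂ) * e p ζ (m * t)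
        = ∑ t : ZMod p, ((((a * t).val + (b * t).val + (-t).val + (d * t).val : ℕ) : ℂ)
            * e p ζ (m * t)) := by
          rw [← Finset.sum_add_distrib, ← Finset.sum_add_distrib, ← Finset.sum_add_distrib]
          exact Finset.sum_congr rfl (fun t _ => hcomb t)
      _ = ∑ t : ZMod p, ((2 * p : ℂ) * e p ζ (m * t) + (if t = 0 then (-2 * p : ℂ) else 0)) :=
          Finset.sum_congr rfl (fun t _ => hsplit t)
      _ = -2 * p := by
          have horth : ∑ t : ZMod p, e p ζ (m * t) = 0 := by
            have h0 : ∑ t : ZMod p, e p ζ (m * t) = ∑ t : ZMod p, e p ζ (t * m) :=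
              Finset.sum_congr rfl (fun t _ => by rw [mul_comm])
            rw [h0, orth hζ hp1 m, if_neg hm, Nat.cast_zero]
          rw [Finset.sum_add_distrib, ← Finset.mul_sum, horth,
              Finset.sum_ite_eq' Finset.univ (0 : ZMod p) (fun _ => (-2 * p : ℂ)),
              if_pos (Finset.mem_univ 0)]
          norm_num
  have hpairing := no_pairing hζ hp1 hp2 a⁻¹ b⁻¹ (-1 : ZMod p)⁻¹ d⁻¹
    (inv_ne_zero ha) (inv_ne_zero hb) (inv_ne_zero hn1) (inv_ne_zero hd) hrel
  rcases hpairing with hcase | hcase | hcase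
  · have hba : b = -a := by
      rw [← inv_inv b, hcase, ← inv_neg, inv_inv]
    exact hab (by rw [hba]; ring)
  · have h1' : (-1 : ZMod p)⁻¹ = -1 := by rw [inv_neg, inv_one]
    rw [h1'] at hcase
    have hai : a⁻¹ = 1 := by linear_combination hcase
    have ha' : a = 1 := by rw [← inv_inv a, hai, inv_one]
    exact ha1 ha'
  · have hda : d = -a := by
      rw [← inv_inv d, hcase, ← inv_neg, inv_inv]
    rw [hd_def] at hda
    exact hb1 (by linear_combination -hda)
end

section
/- Let p ≥ 5 be a prime and let k ∈ ℤ/pℤ satisfy k² − k − 1 ≡ 0 (mod p) with 2 ≤ k ≤ p−2 (as a representative). Then there exist integers m, ℓ such that 0 < ⟨(−k)m + (−k)ℓ⟩ + ⟨m + kℓ⟩ + ⟨−m⟩ + ⟨−ℓ⟩ < p; specifically m = −1, ℓ = k+1 works when k ≥ (p+1)/2, and m = 2−k, ℓ = −1 works when k ≤ (p−1)/2. (This corresponds to exponent data (a,b) = (−k, 1), (c,d) = (−k, k) for monomials x^{−k}y and x^{−k}y^k.) -/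
/-- The least nonnegative residue of an integer `n` modulo `p`. -/
def intRes (p : ℕ) (n : ℤ) : ℕ := (n % (p : ℤ)).toNat

lemma intRes_eq (p : ℕ) (n r : ℤ) (hd : (p : ℤ) ∣ n - r) (h0 : 0 ≤ r) (h1 : r < p) :
    intRes p n = r.toNat := by
  unfold intRes
  congr 1
  have h : n ≡ r [ZMOD p] := (Int.modEq_iff_dvd.mpr hd).symm
  calc n % (p : ℤ) = r % (p : ℤ) := h
    _ = r := Int.emod_eq_of_lt h0 h1

/-- Let `p ≥ 5` be prime and `k` with `2 ≤ k ≤ p - 2` satisfy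
`k² - k - 1 ≡ 0 (mod p)`.  Then there are integers `m, ℓ` with
`0 < ⟨(-k)m + (-k)ℓ⟩ + ⟨m + kℓ⟩ + ⟨-m⟩ + ⟨-ℓ⟩ < p`; specifically `m = -1`, `ℓ = k + 1`
works when `(p+1)/2 ≤ k`, and `m = 2 - k`, `ℓ = -1` works when `k ≤ (p-1)/2`.
(Exponent data `(a,b) = (-k, 1)`, `(c,d) = (-k, k)` for monomials `x⁻ᵏy`, `x⁻ᵏyᵏ`.) -/
theorem exists_int_residue_sum_lt_of_golden
    (p : ℕ) (hp : p.Prime) (hp5 : 5 ≤ p) (k : ℤ)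
    (hk2 : 2 ≤ k) (hkp : k ≤ (p : ℤ) - 2) (hgold : (p : ℤ) ∣ k ^ 2 - k - 1) :
    (∃ m ℓ : ℤ,
        0 < intRes p ((-k) * m + (-k) * ℓ) + intRes p (m + k * ℓ) + intRes p (-m) + intRes p (-ℓ) ∧
        intRes p ((-k) * m + (-k) * ℓ) + intRes p (m + k * ℓ) + intRes p (-m) + intRes p (-ℓ) < p) ∧
    (((p : ℤ) + 1) / 2 ≤ k →
        0 < intRes p ((-k) * (-1) + (-k) * (k + 1)) + intRes p (-1 + k * (k + 1))
            + intRes p (-(-1 : ℤ)) + intRes p (-(k + 1)) ∧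
        intRes p ((-k) * (-1) + (-k) * (k + 1)) + intRes p (-1 + k * (k + 1))
            + intRes p (-(-1 : ℤ)) + intRes p (-(k + 1)) < p) ∧
    (k ≤ ((p : ℤ) - 1) / 2 →
        0 < intRes p ((-k) * (2 - k) + (-k) * (-1)) + intRes p ((2 - k) + k * (-1))
            + intRes p (-(2 - k)) + intRes p (-(-1 : ℤ)) ∧
        intRes p ((-k) * (2 - k) + (-k) * (-1)) + intRes p ((2 - k) + k * (-1))
            + intRes p (-(2 - k)) + intRes p (-(-1 : ℤ)) < p) := by
  have hodd : p % 2 = 1 := by rcases hp.eq_two_or_odd with h | h <;> omega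
  have hoddz : (p : ℤ) % 2 = 1 := by omega
  have hk3 : 3 ≤ k := by
    rcases eq_or_lt_of_le hk2 with h | h
    · exfalso
      have h1 : (p : ℤ) ∣ 1 := by rw [← h] at hgold; simpa using hgold
      have := Int.le_of_dvd one_pos h1
      omega
    · omega
  obtain ⟨t, ht⟩ := hgold
  -- case 1 residues (m = -1, ℓ = k + 1)
  have h1 : intRes p ((-k) * (-1) + (-k) * (k + 1)) = ((p : ℤ) - k - 1).toNat := by
    apply intRes_eq p _ _ ⟨-t - 1, by linear_combination -ht⟩ (by omega) (by omega)
  have h3 : intRes p (-(-1 : ℤ)) = (1 : ℤ).toNat := by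
    apply intRes_eq p _ _ ⟨0, by ring⟩ (by omega) (by omega)
  have h4 : intRes p (-(k + 1)) = ((p : ℤ) - k - 1).toNat := by
    apply intRes_eq p _ _ ⟨-1, by ring⟩ (by omega) (by omega)
  -- case 2 residues (m = 2 - k, ℓ = -1)
  have g1 : intRes p ((-k) * (2 - k) + (-k) * (-1)) = (1 : ℤ).toNat := by
    apply intRes_eq p _ _ ⟨t, by linear_combination ht⟩ (by omega) (by omega)
  have g3 : intRes p (-(2 - k)) = (k - 2).toNat := by
    apply intRes_eq p _ _ ⟨0, by ring⟩ (by omega) (by omega)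
  have case1 : ((p : ℤ) + 1) / 2 ≤ k →
      0 < intRes p ((-k) * (-1) + (-k) * (k + 1)) + intRes p (-1 + k * (k + 1))
          + intRes p (-(-1 : ℤ)) + intRes p (-(k + 1)) ∧
      intRes p ((-k) * (-1) + (-k) * (k + 1)) + intRes p (-1 + k * (k + 1))
          + intRes p (-(-1 : ℤ)) + intRes p (-(k + 1)) < p := by
    intro hle
    have h2 : intRes p (-1 + k * (k + 1)) = (2 * k - (p : ℤ)).toNat := by
      apply intRes_eq p _ _ ⟨t + 1, by linear_combination ht⟩ (by omega) (by omega)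
    rw [h1, h2, h3, h4]
    omega
  have case2 : k ≤ ((p : ℤ) - 1) / 2 →
      0 < intRes p ((-k) * (2 - k) + (-k) * (-1)) + intRes p ((2 - k) + k * (-1))
          + intRes p (-(2 - k)) + intRes p (-(-1 : ℤ)) ∧
      intRes p ((-k) * (2 - k) + (-k) * (-1)) + intRes p ((2 - k) + k * (-1))
          + intRes p (-(2 - k)) + intRes p (-(-1 : ℤ)) < p := by
    intro hle
    have g2 : intRes p ((2 - k) + k * (-1)) = ((p : ℤ) + 2 - 2 * k).toNat := by
      apply intRes_eq p _ _ ⟨-1, by ring⟩ (by omega) (by omega)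
    rw [g1, g2, g3, h3]
    omega
  refine ⟨?_, case1, case2⟩
  rcases le_or_gt (((p : ℤ) + 1) / 2) k with hle | hlt
  · exact ⟨-1, k + 1, case1 hle⟩
  · exact ⟨2 - k, -1, case2 (by omega)⟩
end

section
/- Let p be a prime, F a field of characteristic 0 or > p containing a primitive p-th root of unity ρ, and A a cyclic division algebra of degree p over F with standard generators x, y satisfying x^p = α ∈ F^×, y^p = β ∈ F^×, y x y^{−1} = ρ x. Then for any c in the subfield F[x] and any 1 ≤ k ≤ p−1, one has (x + c·y^k)^p = x^p + N_{F[x]/F}(c)·y^{kp} ∈ F. Hence F·x + F[x]·y^k is a Kummer subspace: every nonzero element z of it satisfies z^p ∈ F^× and z^j ∉ F for 1 ≤ j < p. -/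
/-!
Put `w = yᵏ`. Then `w x = ρᵏ x w`, and `ρᵏ` is again a primitive `p`-th root of unity. If
`v u = q u v` with `q` a primitive `p`-th root of unity, then `(u + v)ᵖ = uᵖ + vᵖ`, since the
Gaussian binomial coefficients `[p, i]_q` vanish for `0 < i < p`. Conjugation by `w` preserves the
Kummer extension `F[x] = F(α^{1/p})` and acts on it as a generator `σ` of its Galois group, so
`(c w)ᵖ = c σ(c) ⋯ σᵖ⁻¹(c) wᵖ = N(c) wᵖ`. Hence every `z = a x + c w` has `zᵖ ∈ F`. Such a `z`
commutes with `x` only if `c = 0`, and `x` is not a scalar since it does not commute with `w`; so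
a nonzero `z` is not a scalar, and as `p` is prime, no power `zʲ` with `0 < j < p` is one either.
-/

/-- `v` is a `p`-Kummer element: `v ^ p` is a nonzero scalar, while no smaller positive
power of `v` is a scalar. -/
def IsKummerElem (F : Type*) {A : Type*} [Field F] [Ring A] [Algebra F A]
    (p : ℕ) (v : A) : Prop :=
  (∃ c : Fˣ, v ^ p = algebraMap F A c) ∧
    ∀ j : ℕ, 1 ≤ j → j < p → v ^ j ∉ Set.range (algebraMap F A)

/-- A Kummer subspace: every nonzero element is a Kummer element. -/
def IsKummerSpace (F : Type*) {A : Type*} [Field F] [Ring A] [Algebra F A]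
    (p : ℕ) (V : Submodule F A) : Prop :=
  ∀ v ∈ V, v ≠ 0 → IsKummerElem F p v

open Finset

section QBinomial

variable {R : Type*} [CommRing R]

def qBinomial (q : R) : ℕ → ℕ → R
  | _, 0 => 1
  | 0, _ + 1 => 0
  | n + 1, i + 1 => q ^ (n - i) * qBinomial q n i + qBinomial q n (i + 1)

@[simp]
lemma qBinomial_zero_right (q : R) (n : ℕ) : qBinomial q n 0 = 1 := by cases n <;> rfl

lemma qBinomial_succ_succ (q : R) (n i : ℕ) :
    qBinomial q (n + 1) (i + 1) = q ^ (n - i) * qBinomial q n i + qBinomial q n (i + 1) := rfl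

lemma qBinomial_eq_zero_of_lt (q : R) : ∀ {n i : ℕ}, n < i → qBinomial q n i = 0
  | 0, _ + 1, _ => rfl
  | n + 1, i + 1, h => by
    rw [qBinomial_succ_succ, qBinomial_eq_zero_of_lt q (by omega),
      qBinomial_eq_zero_of_lt q (by omega), mul_zero, zero_add]

@[simp]
lemma qBinomial_self (q : R) : ∀ n, qBinomial q n n = 1
  | 0 => rfl
  | n + 1 => by
    rw [qBinomial_succ_succ, qBinomial_self q n, qBinomial_eq_zero_of_lt q (by omega),
      Nat.sub_self, pow_zero, mul_one, add_zero]

def qPochhammer (q : R) (n : ℕ) : R := ∏ j ∈ range n, (1 - q ^ (j + 1))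

@[simp]
lemma qPochhammer_zero (q : R) : qPochhammer q 0 = 1 := prod_range_zero _

lemma qPochhammer_succ (q : R) (n : ℕ) :
    qPochhammer q (n + 1) = qPochhammer q n * (1 - q ^ (n + 1)) :=
  prod_range_succ _ _

lemma qBinomial_mul_qPochhammer (q : R) :
    ∀ n i, i ≤ n → qBinomial q n i * (qPochhammer q i * qPochhammer q (n - i)) = qPochhammer q n
  | _, 0, _ => by simp
  | n + 1, i + 1, hi => by
    obtain hlt | heq := Nat.lt_or_eq_of_le hi
    · obtain ⟨d, rfl⟩ : ∃ d, n = i + 1 + d := ⟨n - (i + 1), by omega⟩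
      have h₁ := qBinomial_mul_qPochhammer q (i + 1 + d) i (by omega)
      have h₂ := qBinomial_mul_qPochhammer q (i + 1 + d) (i + 1) (by omega)
      rw [show i + 1 + d - i = d + 1 by omega, qPochhammer_succ q d] at h₁
      rw [show i + 1 + d - (i + 1) = d by omega, qPochhammer_succ q i] at h₂
      rw [qBinomial_succ_succ, show i + 1 + d + 1 - (i + 1) = d + 1 by omega,
        show i + 1 + d - i = d + 1 by omega, qPochhammer_succ q (i + 1 + d),
        qPochhammer_succ q d, qPochhammer_succ q i]
      linear_combination (q ^ (d + 1) * (1 - q ^ (i + 1))) * h₁ + (1 - q ^ (d + 1)) * h₂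
    · obtain rfl : i = n := by omega
      simp

lemma IsPrimitiveRoot.qPochhammer_ne_zero [IsDomain R] {q : R} {n m : ℕ}
    (hq : IsPrimitiveRoot q n) (hm : m < n) : qPochhammer q m ≠ 0 :=
  prod_ne_zero_iff.mpr fun j hj ↦ sub_ne_zero.mpr
    (hq.pow_ne_one_of_pos_of_lt j.succ_ne_zero (by rw [mem_range] at hj; omega)).symm

lemma IsPrimitiveRoot.qPochhammer_self {q : R} {n : ℕ} (hq : IsPrimitiveRoot q n) (hn : 0 < n) :
    qPochhammer q n = 0 :=
  prod_eq_zero (mem_range.mpr (Nat.sub_one_lt hn.ne'))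
    (by rw [Nat.sub_add_cancel hn, hq.pow_eq_one, sub_self])

lemma IsPrimitiveRoot.qBinomial_eq_zero [IsDomain R] {q : R} {n i : ℕ}
    (hq : IsPrimitiveRoot q n) (hi₀ : 0 < i) (hin : i < n) : qBinomial q n i = 0 := by
  have key := qBinomial_mul_qPochhammer q n i hin.le
  rw [hq.qPochhammer_self (hi₀.trans hin)] at key
  exact (mul_eq_zero.mp key).resolve_right
    (mul_ne_zero (hq.qPochhammer_ne_zero hin) (hq.qPochhammer_ne_zero (by omega)))

end QBinomial

section QCommuting

variable {R A : Type*} [CommRing R] [Ring A] [Algebra R A] {q : R} {u v : A}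

lemma pow_mul_eq_smul_mul_pow (h : v * u = q • (u * v)) :
    ∀ m : ℕ, v ^ m * u = q ^ m • (u * v ^ m)
  | 0 => by simp
  | m + 1 => by
    rw [pow_succ, mul_assoc, h, mul_smul_comm, ← mul_assoc, pow_mul_eq_smul_mul_pow h m,
      smul_mul_assoc, smul_smul, mul_assoc, ← pow_succ, ← pow_succ']

lemma add_pow_eq_sum_qBinomial (h : v * u = q • (u * v)) (n : ℕ) :
    (u + v) ^ n = ∑ i ∈ range (n + 1), qBinomial q n i • (u ^ i * v ^ (n - i)) := by
  induction n with
  | zero => simp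
  | succ n ih =>
    have hterm : ∀ i ∈ range (n + 1), qBinomial q n i • (u ^ i * v ^ (n - i)) * (u + v) =
        (q ^ (n - i) * qBinomial q n i) • (u ^ (i + 1) * v ^ (n - i)) +
          qBinomial q n i • (u ^ i * v ^ (n + 1 - i)) := by
      intro i hi
      rw [show n + 1 - i = n - i + 1 by rw [mem_range] at hi; omega, mul_add, smul_mul_assoc,
        smul_mul_assoc, mul_assoc, mul_assoc, pow_mul_eq_smul_mul_pow h, mul_smul_comm,
        smul_smul, ← mul_assoc, ← pow_succ, ← pow_succ, mul_comm (qBinomial q n i)]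
    rw [pow_succ, ih, sum_mul, sum_congr rfl hterm, sum_add_distrib, sum_range_succ' _ (n + 1)]
    simp only [qBinomial_succ_succ, add_smul, sum_add_distrib, Nat.succ_sub_succ]
    rw [add_assoc]
    congr 1
    conv_lhs => rw [sum_range_succ']
    rw [sum_range_succ, qBinomial_eq_zero_of_lt q n.lt_succ_self]
    simp

theorem IsPrimitiveRoot.add_pow_eq_of_mul_eq_smul [IsDomain R] {n : ℕ} (hq : IsPrimitiveRoot q n)
    (hn : 0 < n) (h : v * u = q • (u * v)) : (u + v) ^ n = u ^ n + v ^ n := by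
  rw [add_pow_eq_sum_qBinomial h, sum_range_succ, sum_eq_single 0]
  · simp [add_comm]
  · intro i hi hi₀
    rw [hq.qBinomial_eq_zero (Nat.pos_of_ne_zero hi₀) (mem_range.mp hi), zero_smul]
  · simp [hn]

end QCommuting

section Kummer

variable {F A : Type*} [Field F] [Ring A] [Algebra F A]

lemma isKummerElem_of_pow_eq_algebraMap {p : ℕ} (hp : p.Prime) {z : A} {a : F} (ha : a ≠ 0)
    (hz : z ^ p = algebraMap F A a) (hzF : z ∉ Set.range (algebraMap F A)) :
    IsKummerElem F p z := by
  refine ⟨⟨Units.mk0 a ha, hz⟩, fun j hj₁ hjp ⟨s, hs⟩ ↦ hzF ?_⟩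
  -- `j m = p d + 1`, so `z = z ^ (j m) / a ^ d` is a scalar
  obtain ⟨m, -, hm⟩ := Nat.exists_mul_mod_eq_one_of_coprime
    ((hp.coprime_iff_not_dvd.mpr (Nat.not_dvd_of_pos_of_lt hj₁ hjp)).symm) hp.one_lt
  set d := j * m / p
  have hjm : j * m = p * d + 1 := by rw [← hm, Nat.div_add_mod]
  have hsm : algebraMap F A (s ^ m) = algebraMap F A (a ^ d) * z := by
    rw [map_pow, map_pow, hs, ← hz, ← pow_mul, ← pow_mul, ← pow_succ, ← hjm]
  refine ⟨(a ^ d)⁻¹ * s ^ m, ?_⟩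
  rw [map_mul, hsm, ← mul_assoc, ← map_mul, inv_mul_cancel₀ (pow_ne_zero d ha), map_one, one_mul]

lemma notMem_range_algebraMap_of_mul_eq_smul [NoZeroDivisors A] {q : F} (hq : q ≠ 1) {u v : A}
    (hu : u ≠ 0) (hv : v ≠ 0) (h : v * u = q • (u * v)) : u ∉ Set.range (algebraMap F A) := by
  rintro ⟨s, rfl⟩
  have : (q - 1) • (algebraMap F A s * v) = 0 := by
    rw [sub_smul, one_smul, ← h, Algebra.commutes, sub_self]
  exact mul_ne_zero hu hv ((smul_eq_zero.mp this).resolve_left (sub_ne_zero.mpr hq))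

lemma smul_add_mul_notMem_range_algebraMap [NoZeroDivisors A] {q : F} (hq : q ≠ 1) {x w c : A}
    (hx : x ≠ 0) (hw : w ≠ 0) (hwx : w * x = q • (x * w)) (hxc : Commute x c) {a : F}
    (hz : a • x + c * w ≠ 0) : a • x + c * w ∉ Set.range (algebraMap F A) := by
  rintro ⟨s, hs⟩
  have hc : c = 0 := by
    have hcomm : (a • x + c * w) * x = x * (a • x + c * w) := by rw [← hs, Algebra.commutes]
    rw [add_mul, mul_add, mul_assoc, hwx, smul_mul_assoc, mul_smul_comm a x, mul_smul_comm q c,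
      ← mul_assoc x c, hxc.eq, mul_assoc, add_right_inj] at hcomm
    have h : (q - 1) • (c * (x * w)) = 0 := by rw [sub_smul, one_smul, hcomm, sub_self]
    rcases smul_eq_zero.mp h with h | h
    · exact absurd (sub_eq_zero.mp h) hq
    · exact (mul_eq_zero.mp h).resolve_right (mul_ne_zero hx hw)
  subst hc
  rw [zero_mul, add_zero] at hs hz
  have ha : a ≠ 0 := by rintro rfl; simp at hz
  refine notMem_range_algebraMap_of_mul_eq_smul hq hx hw hwx ⟨a⁻¹ * s, ?_⟩
  rw [map_mul, hs, Algebra.smul_def, ← mul_assoc, ← map_mul, inv_mul_cancel₀ ha, map_one, one_mul]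

lemma mem_span_singleton_union_mul_right_iff {x w z : A} {S : Subalgebra F A} :
    z ∈ Submodule.span F ({x} ∪ {z | ∃ c ∈ S, z = c * w}) ↔
      ∃ a : F, ∃ c ∈ S, z = a • x + c * w := by
  have hS : {z | ∃ c ∈ S, z = c * w} =
      (Subalgebra.toSubmodule S).map (LinearMap.mulRight F w) := by
    ext z
    simp [eq_comm]
  rw [hS, Submodule.span_union, Submodule.span_eq, Submodule.mem_sup]
  simp [Submodule.mem_span_singleton, eq_comm]

end Kummer

section KummerField

open Polynomial

variable {F K : Type*} [Field F] [Field K] [Algebra F K] {n : ℕ} {ρ : F}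

lemma IsPrimitiveRoot.pow_ne_of_notMem_range [NeZero n] (hρ : IsPrimitiveRoot ρ n) {θ : K}
    {a : F} (hθ : θ ^ n = algebraMap F K a) (hθF : θ ∉ Set.range (algebraMap F K)) (b : F) :
    b ^ n ≠ a := by
  rintro rfl
  have hb : algebraMap F K b ≠ 0 := by
    rintro hb
    rw [map_pow, hb, zero_pow (NeZero.ne n), pow_eq_zero_iff (NeZero.ne n)] at hθ
    exact hθF ⟨0, by rw [hθ, map_zero]⟩
  obtain ⟨i, -, hi⟩ := (hρ.map_of_injective (algebraMap F K).injective).eq_pow_of_pow_eq_one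
    (ξ := θ / algebraMap F K b) (by rw [div_pow, hθ, map_pow, div_self (pow_ne_zero n hb)])
  exact hθF ⟨ρ ^ i * b, by rw [map_mul, map_pow, hi, div_mul_cancel₀ θ hb]⟩

lemma IsPrimitiveRoot.isSplittingField_X_pow_sub_C (hρ : IsPrimitiveRoot ρ n) (hn : 0 < n)
    {θ : K} {a : F} (hθ : θ ^ n = algebraMap F K a) (hadj : Algebra.adjoin F {θ} = ⊤) :
    IsSplittingField F K (X ^ n - C a) := by
  constructor
  · rw [Polynomial.map_sub, Polynomial.map_pow, Polynomial.map_X, Polynomial.map_C]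
    exact X_pow_sub_C_splits_of_isPrimitiveRoot
      (hρ.map_of_injective (algebraMap F K).injective) hθ
  · rw [eq_top_iff, ← hadj]
    refine Algebra.adjoin_mono (Set.singleton_subset_iff.mpr ?_)
    rw [mem_rootSet_of_ne (X_pow_sub_C_ne_zero hn a), map_sub, map_pow, aeval_X, aeval_C, hθ,
      sub_self]

lemma Algebra.norm_eq_prod_pow_of_orderOf_eq_finrank [FiniteDimensional F K] [IsGalois F K]
    {σ : Gal(K/F)} (hσ : orderOf σ = Module.finrank F K) (c : K) :
    algebraMap F K (Algebra.norm F c) = ∏ i ∈ range (Module.finrank F K), (σ ^ i) c := by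
  classical
  have hgen : ∀ τ : Gal(K/F), τ ∈ Subgroup.zpowers σ :=
    (Subgroup.eq_top_iff' _).mp (Subgroup.eq_top_of_card_eq _
      (by rw [Nat.card_zpowers, hσ, IsGalois.card_aut_eq_finrank]))
  rw [Algebra.norm_eq_prod_automorphisms, ← IsCyclic.image_range_orderOf hgen, hσ,
    prod_image fun i hi j hj hij ↦ pow_injOn_Iio_orderOf (by simpa [hσ] using hi)
      (by simpa [hσ] using hj) hij]

theorem IsPrimitiveRoot.algebraMap_norm_eq_prod_pow {p : ℕ} (hp : p.Prime)
    (hρ : IsPrimitiveRoot ρ p) {θ : K} {a : F} (hθ : θ ^ p = algebraMap F K a)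
    (hθF : θ ∉ Set.range (algebraMap F K)) (hadj : Algebra.adjoin F {θ} = ⊤) {σ : K ≃ₐ[F] K}
    (hσ : σ θ = algebraMap F K ρ * θ) (c : K) :
    algebraMap F K (Algebra.norm F c) = ∏ i ∈ range p, (σ ^ i) c := by
  have : Fact p.Prime := ⟨hp⟩
  have := hρ.isSplittingField_X_pow_sub_C hp.pos hθ hadj
  have hirr := X_pow_sub_C_irreducible_of_prime hp (hρ.pow_ne_of_notMem_range hθ hθF)
  have hζ : (primitiveRoots p F).Nonempty := ⟨ρ, (mem_primitiveRoots hp.pos).mpr hρ⟩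
  have := isGalois_of_isSplittingField_X_pow_sub_C hζ hirr K
  have := IsSplittingField.finiteDimensional K (X ^ p - C a)
  have hrank := finrank_of_isSplittingField_X_pow_sub_C hζ hirr K
  have horder : orderOf σ = p := by
    refine orderOf_eq_prime ?_ fun h ↦ hρ.ne_one hp.one_lt ?_
    · rw [← hrank, ← IsGalois.card_aut_eq_finrank, pow_card_eq_one']
    · have hθ0 : θ ≠ 0 := fun h0 ↦ hθF ⟨0, by rw [h0, map_zero]⟩
      rw [h, AlgEquiv.one_apply] at hσ
      exact (algebraMap F K).injective
        ((mul_right_cancel₀ hθ0 (hσ.symm.trans (one_mul θ).symm)).trans (map_one _).symm)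
  rw [← hrank, Algebra.norm_eq_prod_pow_of_orderOf_eq_finrank (horder.trans hrank.symm)]

end KummerField

section TwistedPower

variable {F K A : Type*} [CommSemiring F] [CommSemiring K] [Semiring A] [Algebra F K] [Algebra F A]

lemma mul_pow_eq_map_prod_mul_pow (φ : K →ₐ[F] A) (σ : K ≃ₐ[F] K) {w : A}
    (hw : ∀ c, w * φ c = φ (σ c) * w) (c : K) (m : ℕ) :
    (φ c * w) ^ m = φ (∏ i ∈ range m, (σ ^ i) c) * w ^ m := by
  have hwm : ∀ m c, w ^ m * φ c = φ ((σ ^ m) c) * w ^ m := by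
    intro m
    induction m with
    | zero => simp
    | succ m ih =>
      intro c
      rw [pow_succ', mul_assoc, ih, ← mul_assoc, hw, mul_assoc, pow_succ' σ, AlgEquiv.mul_apply]
  induction m with
  | zero => simp
  | succ m ih =>
    rw [pow_succ, ih, mul_assoc, ← mul_assoc (w ^ m), hwm, prod_range_succ, map_mul,
      pow_succ, mul_assoc, mul_assoc]

end TwistedPower

section DivisionAlgebra

variable {F A : Type*} [Field F] [DivisionRing A] [Algebra F A]

open scoped IsMulCommutative in
lemma IsIntegral.isField_adjoin_singleton {x : A} (hx : IsIntegral F x) :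
    IsField (Algebra.adjoin F {x}) :=
  haveI : Module.Finite F (Algebra.adjoin F {x}) := .of_fg hx.fg_adjoin_singleton
  isField_of_isIntegral_of_isField' (Field.toIsField F)

lemma exists_algEquiv_adjoin_singleton_conj {x : A} (w : Aˣ) {q : F} (hq : q ≠ 0)
    (hwx : w * x = q • (x * w)) :
    ∃ σ : Algebra.adjoin F {x} ≃ₐ[F] Algebra.adjoin F {x}, ∀ c, (w : A) * c = σ c * w := by
  let e : A ≃ₐ[F] A := MulSemiringAction.toAlgEquiv F A (ConjAct.toConjAct w)
  have he : ∀ a, e a = w * a * ↑w⁻¹ := fun a ↦ rfl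
  have hsmul : ∀ (r : F) (y : A), r ≠ 0 → Algebra.adjoin F {y} ≤ Algebra.adjoin F {r • y} :=
    fun r y hr ↦ Algebra.adjoin_le <| Set.singleton_subset_iff.mpr <| by
      have := Subalgebra.smul_mem _ (Algebra.self_mem_adjoin_singleton F (r • y)) r⁻¹
      rwa [smul_smul, inv_mul_cancel₀ hr, one_smul] at this
  have hmap : (Algebra.adjoin F {x}).map (e : A →ₐ[F] A) = Algebra.adjoin F {x} := by
    rw [AlgHom.map_adjoin_singleton, AlgEquiv.coe_toAlgHom, he, hwx, smul_mul_assoc,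
      Units.mul_inv_cancel_right]
    refine le_antisymm ?_ (hsmul q x hq)
    have := hsmul q⁻¹ (q • x) (inv_ne_zero hq)
    rwa [smul_smul, inv_mul_cancel₀ hq, one_smul] at this
  exact ⟨(e.subalgebraMap _).trans (Subalgebra.equivOfEq _ _ hmap),
    fun c ↦ (Units.inv_mul_cancel_right _ w).symm⟩

theorem mul_pow_eq_algebraMap_norm_mul_pow {p : ℕ} (hp : p.Prime) {ρ : F}
    (hρ : IsPrimitiveRoot ρ p) {x w : A} {α : F} (hx : x ^ p = algebraMap F A α)
    (hxF : x ∉ Set.range (algebraMap F A)) (hw : w ≠ 0) (hwx : w * x = ρ • (x * w))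
    (c : Algebra.adjoin F {x}) :
    ((c : A) * w) ^ p = algebraMap F A (Algebra.norm F c) * w ^ p := by
  let : Field (Algebra.adjoin F {x}) :=
    (IsIntegral.of_pow hp.pos (hx ▸ isIntegral_algebraMap)).isField_adjoin_singleton.toField
  let θ : Algebra.adjoin F {x} := ⟨x, Algebra.self_mem_adjoin_singleton F x⟩
  have hθF : θ ∉ Set.range (algebraMap F _) := fun ⟨s, hs⟩ ↦ hxF ⟨s, congrArg Subtype.val hs⟩
  have hadj : Algebra.adjoin F {θ} = ⊤ := by
    convert Algebra.adjoin_adjoin_coe_preimage (R := F) (s := {x})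
    ext
    simp [θ, Subtype.ext_iff]
  obtain ⟨σ, hσ⟩ :=
    exists_algEquiv_adjoin_singleton_conj (Units.mk0 w hw) (hρ.ne_zero hp.ne_zero) hwx
  simp only [Units.val_mk0] at hσ
  have hσθ : σ θ = algebraMap F _ ρ * θ := Subtype.ext <| mul_right_cancel₀ hw <| by
    rw [← hσ θ, hwx, Algebra.smul_def, ← mul_assoc]
    rfl
  refine (mul_pow_eq_map_prod_mul_pow (Algebra.adjoin F {x}).val σ hσ c p).trans ?_
  rw [← hρ.algebraMap_norm_eq_prod_pow hp (Subtype.ext hx) hθF hadj hσθ]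
  rfl

theorem smul_add_mul_pow {p : ℕ} (hp : p.Prime) {ρ : F} (hρ : IsPrimitiveRoot ρ p) {x w : A}
    {α : F} (hx : x ^ p = algebraMap F A α) (hxF : x ∉ Set.range (algebraMap F A)) (hw : w ≠ 0)
    (hwx : w * x = ρ • (x * w)) (a : F) (c : Algebra.adjoin F {x}) :
    (a • x + c * w) ^ p = a ^ p • x ^ p + algebraMap F A (Algebra.norm F c) * w ^ p := by
  have hcomm : c * w * a • x = ρ • (a • x * (c * w)) := by
    rw [mul_smul_comm, mul_assoc, hwx, mul_smul_comm, ← mul_assoc (c : A),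
      ← (Algebra.commute_of_mem_adjoin_self c.2).eq, smul_mul_assoc, mul_assoc, smul_comm]
  rw [hρ.add_pow_eq_of_mul_eq_smul hp.pos hcomm, smul_pow,
    mul_pow_eq_algebraMap_norm_mul_pow hp hρ hx hxF hw hwx]

end DivisionAlgebra

theorem cyclic_algebra_standard_space_isKummer_general
    (p : ℕ) (hp : p.Prime)
    (F : Type*) [Field F] (A : Type*) [DivisionRing A] [Algebra F A]
    (ρ : F) (hρ : IsPrimitiveRoot ρ p)
    (x y : A) (α β : Fˣ)
    (hx : x ^ p = algebraMap F A α) (hy : y ^ p = algebraMap F A β)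
    (hyx : y * x = algebraMap F A ρ * (x * y))
    (k : ℕ) (hk1 : 1 ≤ k) (hkp : k ≤ p - 1) :
    (∀ c : Algebra.adjoin F ({x} : Set A),
        (x + (c : A) * y ^ k) ^ p =
          x ^ p + algebraMap F A (Algebra.norm F c) * y ^ (k * p)) ∧
    IsKummerSpace F p (Submodule.span F
      ({x} ∪ {z : A | ∃ c ∈ Algebra.adjoin F ({x} : Set A), z = c * y ^ k})) := by
  have ne_zero_of_pow {v : A} {u : Fˣ} (hv : v ^ p = algebraMap F A u) : v ≠ 0 := by
    rintro rfl
    rw [zero_pow hp.ne_zero, eq_comm, map_eq_zero_iff _ (algebraMap F A).injective] at hv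
    exact u.ne_zero hv
  have hx0 := ne_zero_of_pow hx
  have hw0 := pow_ne_zero k (ne_zero_of_pow hy)
  have hρk : IsPrimitiveRoot (ρ ^ k) p := hρ.pow_of_coprime k
    (hp.coprime_iff_not_dvd.mpr (Nat.not_dvd_of_pos_of_lt hk1 (by omega))).symm
  have hwx : y ^ k * x = ρ ^ k • (x * y ^ k) :=
    pow_mul_eq_smul_mul_pow (by rw [hyx, Algebra.smul_def]) k
  have hxF := notMem_range_algebraMap_of_mul_eq_smul (hρk.ne_one hp.one_lt) hx0 hw0 hwx
  have hpow := smul_add_mul_pow hp hρk hx hxF hw0 hwx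
  refine ⟨fun c ↦ by simpa [← pow_mul] using hpow 1 c, fun z hz hz0 ↦ ?_⟩
  obtain ⟨a, c, hc, rfl⟩ := mem_span_singleton_union_mul_right_iff.mp hz
  have hzp : (a • x + c * y ^ k) ^ p =
      algebraMap F A (a ^ p * α + Algebra.norm F (⟨c, hc⟩ : Algebra.adjoin F {x}) * β ^ k) := by
    rw [hpow a ⟨c, hc⟩, hx, ← pow_mul, mul_comm k p, pow_mul, hy, Algebra.smul_def]
    simp only [map_add, map_mul, map_pow]
  refine isKummerElem_of_pow_eq_algebraMap hp (fun h ↦ hz0 ?_) hzp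
    (smul_add_mul_notMem_range_algebraMap (hρk.ne_one hp.one_lt) hx0 hw0 hwx
      (Algebra.commute_of_mem_adjoin_self hc) hz0)
  rwa [h, map_zero, pow_eq_zero_iff hp.ne_zero] at hzp

/-- In a cyclic division algebra
`A = F[x, y : xᵖ = α, yᵖ = β, yxy⁻¹ = ρx]` of degree `p` (with `ρ ∈ F` a primitive
`p`-th root of unity and `char F = 0` or `> p`), for every `c ∈ F[x]` and `1 ≤ k ≤ p-1`
one has `(x + c·yᵏ)ᵖ = xᵖ + N_{F[x]/F}(c)·yᵏᵖ ∈ F`, and `F·x + F[x]·yᵏ` is a Kummer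
subspace. -/
theorem cyclic_algebra_standard_space_isKummer
    (p : ℕ) (hp : p.Prime)
    (F : Type*) [Field F] (A : Type*) [DivisionRing A] [Algebra F A]
    (hchar : ∀ n : ℕ, n ≠ 0 → n ≤ p → (n : F) ≠ 0)
    (ρ : F) (hρ : IsPrimitiveRoot ρ p)
    (hdeg : Module.finrank F A = p ^ 2) (hcen : Subalgebra.center F A = ⊥)
    (x y : A) (α β : Fˣ)
    (hx : x ^ p = algebraMap F A α) (hy : y ^ p = algebraMap F A β)
    (hyx : y * x = algebraMap F A ρ * (x * y))
    (k : ℕ) (hk1 : 1 ≤ k) (hkp : k ≤ p - 1) :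
    (∀ c : Algebra.adjoin F ({x} : Set A),
        (x + (c : A) * y ^ k) ^ p =
          x ^ p + algebraMap F A (Algebra.norm F c) * y ^ (k * p)) ∧
    IsKummerSpace F p (Submodule.span F
      ({x} ∪ {z : A | ∃ c ∈ Algebra.adjoin F ({x} : Set A), z = c * y ^ k})) :=
  cyclic_algebra_standard_space_isKummer_general p hp F A ρ hρ x y α β hx hy hyx k hk1 hkp
end

section
/- Let p be a prime, F a field of characteristic 0 or > p containing a primitive p-th root of unity, and A a central division algebra of degree p over F. If v, v' ∈ A commute and F v + F v' is a Kummer subspace (so in particular v, v' ≠ 0 are Kummer elements), then v and v' are linearly dependent over F. (Key step: p v^{p−1} v' = v^{p−1} * v' ∈ F, hence v^{−1} v' ∈ F.) -/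
/-- In a central division algebra `A` of degree `p` over `F`
(char `0` or `> p`, containing a primitive `p`-th root of unity), if `v, v'` commute and
`F v + F v'` is a Kummer subspace, then `v` and `v'` are linearly dependent over `F`. -/
theorem commuting_kummer_linearly_dependent
    (p : ℕ) (hp : p.Prime)
    (F : Type*) [Field F] (A : Type*) [DivisionRing A] [Algebra F A]
    (hchar : ∀ n : ℕ, n ≠ 0 → n ≤ p → (n : F) ≠ 0)
    (hroot : ∃ ρ : F, IsPrimitiveRoot ρ p)
    (hdeg : Module.finrank F A = p ^ 2) (hcen : Subalgebra.center F A = ⊥)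
    (v v' : A) (hcomm : Commute v v')
    (hK : IsKummerSpace F p (Submodule.span F {v, v'})) :
    ¬ LinearIndependent F ![v, v'] := by
  classical
  intro hind
  rw [LinearIndependent.pair_iff] at hind
  have hvmem : v ∈ Submodule.span F {v, v'} := Submodule.subset_span (by simp)
  have hv'mem : v' ∈ Submodule.span F {v, v'} := Submodule.subset_span (by simp)
  have hvne : v ≠ 0 := by
    intro h
    exact one_ne_zero ((hind 1 0 (by simp [h])).1)
  obtain ⟨⟨c, hc⟩, -⟩ := hK v hvmem hvne
  set S : Submodule F A := LinearMap.range (Algebra.linearMap F A) with hS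
  set a : ℕ → A := fun m => v' ^ m * v ^ (p - m) * (p.choose m : A) with ha
  have key : ∀ t : F, ∑ m ∈ Finset.range (p+1), t ^ m • a m ∈ S := by
    intro t
    have hne : v + t • v' ≠ 0 := by
      intro h
      exact one_ne_zero ((hind 1 t (by simpa using h)).1)
    have hmem : v + t • v' ∈ Submodule.span F {v, v'} :=
      Submodule.add_mem _ hvmem (Submodule.smul_mem _ _ hv'mem)
    obtain ⟨⟨c', hc'⟩, -⟩ := hK _ hmem hne
    have hcomm' : Commute (t • v') v := (hcomm.symm.smul_left t)
    have hexp : (v + t • v') ^ p = ∑ m ∈ Finset.range (p+1), t ^ m • a m := by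
      rw [show v + t • v' = t • v' + v from add_comm _ _, hcomm'.add_pow]
      refine Finset.sum_congr rfl fun m hm => ?_
      rw [smul_pow, ha]
      simp only [smul_mul_assoc]
    rw [← hexp, hc']
    exact ⟨c', rfl⟩
  -- injectivity of casts on 0..p
  have hinj : Set.InjOn (Nat.cast : ℕ → F) (Finset.range (p+1)) := by
    have key2 : ∀ i j : ℕ, i < j → j ≤ p → (i : F) ≠ (j : F) := by
      intro i j hlt hj hij
      have h0 : ((j - i : ℕ) : F) = 0 := by
        rw [Nat.cast_sub hlt.le, ← hij, sub_self]
      exact hchar _ (by omega) (by omega) h0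
    intro i hi j hj hij
    simp only [Finset.coe_range, Set.mem_Iio] at hi hj
    rcases lt_trichotomy i j with h | h | h
    · exact absurd hij (key2 i j h (by omega))
    · exact h
    · exact absurd hij.symm (key2 j i h (by omega))
  -- each coefficient lies in S
  have hcoeff : ∀ m ∈ Finset.range (p+1), a m ∈ S := by
    intro m hm
    rw [← Submodule.Quotient.mk_eq_zero S,
      ← (Module.forall_dual_apply_eq_zero_iff F (Submodule.Quotient.mk (a m) : A ⧸ S))]
    intro φ
    set ψ : A →ₗ[F] F := φ.comp S.mkQ with hψ
    have hψS : ∀ x ∈ S, ψ x = 0 := by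
      intro x hx
      have : S.mkQ x = 0 := by
        rw [Submodule.mkQ_apply, Submodule.Quotient.mk_eq_zero]; exact hx
      simp [hψ, this]
    set P : Polynomial F := ∑ k ∈ Finset.range (p+1), Polynomial.C (ψ (a k)) * Polynomial.X ^ k
      with hP
    have heval : ∀ t : F, P.eval t = 0 := by
      intro t
      have h0 : ψ (∑ m ∈ Finset.range (p+1), t ^ m • a m) = 0 := hψS _ (key t)
      rw [map_sum] at h0
      simp only [map_smul, smul_eq_mul] at h0
      rw [hP]
      simp only [Polynomial.eval_finset_sum, Polynomial.eval_mul, Polynomial.eval_C,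
        Polynomial.eval_pow, Polynomial.eval_X]
      rw [← h0]
      exact Finset.sum_congr rfl fun k _ => mul_comm _ _
    have hPdeg : P.natDegree ≤ p := by
      refine Polynomial.natDegree_sum_le_of_forall_le _ _ fun k hk => ?_
      refine le_trans (Polynomial.natDegree_mul_le) ?_
      simp only [Polynomial.natDegree_C, Polynomial.natDegree_X_pow, zero_add]
      exact Nat.lt_succ_iff.mp (Finset.mem_range.mp hk)
    have hP0 : P = 0 := by
      by_contra hP0
      have hsub : (Finset.range (p+1)).image (Nat.cast : ℕ → F) ⊆ P.roots.toFinset := by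
        intro t ht
        rw [Multiset.mem_toFinset, Polynomial.mem_roots hP0]
        exact heval t
      have hcard : p + 1 ≤ P.roots.toFinset.card := by
        calc p + 1 = ((Finset.range (p+1)).image (Nat.cast : ℕ → F)).card := by
              rw [Finset.card_image_of_injOn hinj, Finset.card_range]
          _ ≤ P.roots.toFinset.card := Finset.card_le_card hsub
      have := le_trans hcard (le_trans (Multiset.toFinset_card_le _)
        (le_trans (Polynomial.card_roots' P) hPdeg))
      omega
    have hco : P.coeff m = ψ (a m) := by
      rw [hP, Polynomial.finset_sum_coeff]
      rw [Finset.sum_eq_single m]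
      · simp
      · intro k hk hkm
        simp [Polynomial.coeff_C_mul, Polynomial.coeff_X_pow, (Ne.symm hkm)]
      · intro h; exact absurd hm h
    show ψ (a m) = 0
    rw [← hco, hP0, Polynomial.coeff_zero]
  -- now a 1 ∈ S
  obtain ⟨β, hβ⟩ := hcoeff 1 (Finset.mem_range.mpr (by have := hp.two_le; omega))
  have hβ' : algebraMap F A β = a 1 := hβ
  have h2 : (p : A) * v = v * (p : A) := (Nat.cast_commute p v).eq
  have hva : v' * v ^ (p - 1) * v = (c : F) • v' := by
    rw [mul_assoc, ← pow_succ, Nat.sub_add_cancel hp.one_lt.le, hc, ← Algebra.commutes,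
      ← Algebra.smul_def]
  have hav : a 1 * v = ((p : F) * c) • v' := by
    calc a 1 * v = v' * v ^ (p - 1) * (p : A) * v := by simp [ha]
      _ = v' * v ^ (p - 1) * v * (p : A) := by rw [mul_assoc, h2, ← mul_assoc]
      _ = ((c : F) • v') * (p : A) := by rw [hva]
      _ = ((p : F) * c) • v' := by
          rw [show ((p : A)) = algebraMap F A (p : F) by simp, Algebra.smul_def,
            Algebra.smul_def, mul_assoc, ← Algebra.commutes ((p : F)) v', ← mul_assoc,
            ← map_mul, mul_comm (c : F) (p : F)]
  have heq : β • v + (-((p : F) * c)) • v' = 0 := by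
    rw [Algebra.smul_def, hβ', hav]
    simp
  have hz := (hind β (-((p : F) * c)) heq).2
  have hpne : (p : F) ≠ 0 := hchar p hp.ne_zero le_rfl
  rw [neg_eq_zero, mul_eq_zero] at hz
  rcases hz with h | h
  · exact hpne h
  · exact c.ne_zero h
end

section
/- Let p ≥ 5 be prime and let a, b ∈ ℤ/pℤ. If a = 1, or b = 1, or a + b ≡ 0 (mod p), or a + b ≡ 1 (mod p), then for every invertible k ∈ ℤ/pℤ one has ⟨ka⟩ + ⟨kb⟩ + ⟨−k⟩ ≥ p, where ⟨x⟩ denotes the least nonnegative residue. -/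
/-- Let `p ≥ 5` be prime and `a b : ZMod p` be nonzero.  If `a = 1`,
or `b = 1`, or `a + b = 0`, or `a + b = 1`, then for every invertible `k` one has
`⟨ka⟩ + ⟨kb⟩ + ⟨-k⟩ ≥ p`, where `⟨x⟩` is the least nonnegative residue. -/
theorem residue_sum_ge_of_standard_case
    (p : ℕ) (hp : p.Prime) (hp5 : 5 ≤ p) (a b : ZMod p)
    (ha : a ≠ 0) (hb : b ≠ 0)
    (hcase : a = 1 ∨ b = 1 ∨ a + b = 0 ∨ a + b = 1) :
    ∀ k : ZMod p, k ≠ 0 → p ≤ (k * a).val + (k * b).val + (-k).val := by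
  haveI : Fact p.Prime := ⟨hp⟩
  intro k hk
  have hka : k * a ≠ 0 := mul_ne_zero hk ha
  have hkb : k * b ≠ 0 := mul_ne_zero hk hb
  have hnegk : (-k).val = p - k.val := by
    rw [ZMod.neg_val, if_neg hk]
  have hkval : k.val ≤ p := le_of_lt (ZMod.val_lt k)
  rcases hcase with h | h | h | h
  · subst h
    rw [mul_one, hnegk]
    omega
  · subst h
    rw [mul_one, hnegk]
    have : (k * a).val < p := ZMod.val_lt _
    omega
  · have hb' : b = -a := by linear_combination h
    subst hb'
    have : k * -a = -(k * a) := by ring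
    rw [this, ZMod.neg_val, if_neg hka, hnegk]
    have := ZMod.val_lt (k * a)
    omega
  · have hsum : k * a + k * b = k := by linear_combination k * h
    have hmod : ((k * a).val + (k * b).val) % p = k.val := by
      rw [← ZMod.val_add, hsum]
    set x := (k * a).val + (k * b).val with hx
    have hx2 : x < 2 * p := by
      have := ZMod.val_lt (k * a); have := ZMod.val_lt (k * b); omega
    rw [hnegk]
    rcases lt_or_ge x p with h' | h'
    · rw [Nat.mod_eq_of_lt h'] at hmod
      omega
    · have hxe : x % p = x - p := by
        rw [Nat.mod_eq_sub_mod h', Nat.mod_eq_of_lt]; omega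
      omega
end
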